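/- Let y be the disk billiard trajectory associated with θ₀ ∈ ℝ and δ ∈ (0,π) with δ/π irrational. Then y satisfies (GRC) for every ε > 0, where ℝ² carries the Euclidean metric. -/

import Mathlib

open MeasureTheory Filter

/-- A map `y : [0,∞) → M` (modeled on `ℝ`) satisfies the Geodesic Recurrence Condition (GRC)
for `ε > 0` if there are a point `p ∈ M` and a radius `0 < r < ε` such that
`liminf_{T→∞} (1/T)·λ({t ∈ [0,T] : d(y t, p) < r}) > 0`. -/
def SatisfiesGRC {M : Type*} [MetricSpace M] (y : ℝ → M) (ε : ℝ) : Prop :=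
  ∃ p : M, ∃ r : ℝ, 0 < r ∧ r < ε ∧
    0 < Filter.liminf
      (fun T : ℝ => (volume {t ∈ Set.Icc (0 : ℝ) T | dist (y t) p < r}).toReal / T) Filter.atTop

/-- The `k`-th bounce point `b_k = (cos(θ₀ + kδ), sin(θ₀ + kδ))` on the unit circle. -/
noncomputable def diskBounce (θ₀ δ : ℝ) (k : ℕ) : EuclideanSpace ℝ (Fin 2) :=
  WithLp.toLp 2 ![Real.cos (θ₀ + k * δ), Real.sin (θ₀ + k * δ)]

/-- The unit-speed billiard trajectory of the closed unit disk bouncing at the points `b_k`: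
with `ℓ = 2 sin(δ/2)`, `y(t) = b_k + ((t − kℓ)/ℓ)·(b_{k+1} − b_k)` for `t ∈ [kℓ, (k+1)ℓ]`. -/
noncomputable def diskBilliard (θ₀ δ : ℝ) (t : ℝ) : EuclideanSpace ℝ (Fin 2) :=
  diskBounce θ₀ δ (⌊t / (2 * Real.sin (δ / 2))⌋.toNat) +
    ((t - (⌊t / (2 * Real.sin (δ / 2))⌋.toNat : ℝ) * (2 * Real.sin (δ / 2))) /
        (2 * Real.sin (δ / 2))) •
      (diskBounce θ₀ δ (⌊t / (2 * Real.sin (δ / 2))⌋.toNat + 1) -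
        diskBounce θ₀ δ (⌊t / (2 * Real.sin (δ / 2))⌋.toNat))

open Real
open scoped ENNReal

private lemma bounce_dist (θ₀ δ : ℝ) (j k : ℕ) :
    dist (diskBounce θ₀ δ j) (diskBounce θ₀ δ k)
      = 2 * |Real.sin (((j : ℝ) - k) * δ / 2)| := by
  have hA : dist (diskBounce θ₀ δ j) (diskBounce θ₀ δ k)
      = Real.sqrt ((cos (θ₀ + j * δ) - cos (θ₀ + k * δ)) ^ 2
        + (sin (θ₀ + j * δ) - sin (θ₀ + k * δ)) ^ 2) := by
    rw [EuclideanSpace.dist_eq]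
    congr 1
    rw [Fin.sum_univ_two]
    simp [diskBounce, Real.dist_eq, sq_abs]
  rw [hA]
  have key : (cos (θ₀ + j * δ) - cos (θ₀ + k * δ)) ^ 2
        + (sin (θ₀ + j * δ) - sin (θ₀ + k * δ)) ^ 2
      = (2 * sin (((j : ℝ) - k) * δ / 2)) ^ 2 := by
    have h1 := Real.sin_sq_add_cos_sq (θ₀ + j * δ)
    have h2 := Real.sin_sq_add_cos_sq (θ₀ + k * δ)
    have h3 := Real.cos_sub (θ₀ + j * δ) (θ₀ + k * δ)
    have h4 := Real.cos_two_mul (((j : ℝ) - k) * δ / 2)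
    have h5 := Real.sin_sq_add_cos_sq (((j : ℝ) - k) * δ / 2)
    have he : (θ₀ + (j : ℝ) * δ) - (θ₀ + (k : ℝ) * δ) = 2 * (((j : ℝ) - k) * δ / 2) := by ring
    rw [he] at h3
    linear_combination h1 + h2 + 2*h3 - 2*h4 - 4*h5
  rw [key, Real.sqrt_sq_eq_abs, abs_mul]
  norm_num

private lemma bounce_step (θ₀ δ : ℝ) (hδ : δ ∈ Set.Ioo (0:ℝ) π) (k : ℕ) :
    dist (diskBounce θ₀ δ (k+1)) (diskBounce θ₀ δ k) = 2 * Real.sin (δ / 2) := by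
  rw [bounce_dist]
  have h : (((k:ℕ)+1 : ℕ) : ℝ) - (k : ℝ) = 1 := by push_cast; ring
  rw [h, one_mul]
  rw [abs_of_pos (Real.sin_pos_of_pos_of_lt_pi (by linarith [hδ.1]) (by linarith [hδ.2, Real.pi_pos]))]

private lemma bounce_close (θ₀ δ : ℝ) (k : ℕ) (n : ℤ) :
    dist (diskBounce θ₀ δ k) (diskBounce θ₀ δ 0) ≤ |(k:ℝ) * δ - 2*π*n| := by
  rw [bounce_dist]
  have hx : ((k:ℝ) - (0:ℕ)) * δ / 2 = ((k:ℝ)*δ - 2*π*n)/2 + n*π := by push_cast; ring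
  rw [hx, Real.sin_add, Real.sin_int_mul_pi, mul_zero, add_zero, abs_mul]
  have h0 : Real.sin ((n:ℝ)*π) = 0 := Real.sin_int_mul_pi n
  have h1 := Real.sin_sq_add_cos_sq ((n:ℝ)*π)
  have hc2 : Real.cos ((n:ℝ)*π)^2 = 1 := by linear_combination h1 - Real.sin ((n:ℝ)*π) * h0
  have hcos : |Real.cos ((n:ℝ)*π)| = 1 := by
    rw [← Real.sqrt_sq_eq_abs, hc2, Real.sqrt_one]
  rw [hcos, mul_one]
  calc 2 * |sin (((k:ℝ)*δ - 2*π*n)/2)| ≤ 2 * |((k:ℝ)*δ - 2*π*n)/2| :=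
        mul_le_mul_of_nonneg_left Real.abs_sin_le_abs (by norm_num)
    _ = |(k:ℝ)*δ - 2*π*n| := by rw [abs_div, abs_of_pos (by norm_num : (0:ℝ) < 2)]; ring

private lemma floor_toNat_eq (L : ℝ) (hL : 0 < L) (k : ℕ) (t : ℝ)
    (h1 : (k:ℝ)*L ≤ t) (h2 : t < ((k:ℝ)+1)*L) : (⌊t / L⌋).toNat = k := by
  have h : ⌊t / L⌋ = (k : ℤ) := by
    rw [Int.floor_eq_iff]
    constructor
    · push_cast
      rw [le_div_iff₀ hL]
      linarith
    · push_cast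
      rw [div_lt_iff₀ hL]
      linarith
  simp [h]

private lemma traj_close (θ₀ δ : ℝ) (hδ : δ ∈ Set.Ioo (0:ℝ) π) (k : ℕ) (t : ℝ)
    (h1 : (k:ℝ) * (2*Real.sin (δ/2)) ≤ t) (h2 : t < ((k:ℝ)+1) * (2*Real.sin (δ/2))) :
    dist (diskBilliard θ₀ δ t) (diskBounce θ₀ δ k) = t - (k:ℝ) * (2*Real.sin (δ/2)) := by
  have hsin : 0 < Real.sin (δ/2) :=
    Real.sin_pos_of_pos_of_lt_pi (by linarith [hδ.1]) (by linarith [hδ.2, Real.pi_pos])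
  have hL : 0 < 2*Real.sin (δ/2) := by linarith
  have hfl := floor_toNat_eq (2*Real.sin (δ/2)) hL k t h1 h2
  unfold diskBilliard
  rw [hfl, dist_eq_norm, add_sub_cancel_left, norm_smul, ← dist_eq_norm, bounce_step θ₀ δ hδ,
    Real.norm_eq_abs, abs_of_nonneg (div_nonneg (by linarith) hL.le)]
  exact div_mul_cancel₀ _ hL.ne'

private lemma exists_small (δ : ℝ) (hδpos : 0 < δ) (hirr : Irrational (δ / Real.pi))
    (η : ℝ) (hη : 0 < η) :
    ∃ d : ℕ, 1 ≤ d ∧ ∃ n : ℤ, (d:ℝ) * δ - 2*π*n ≠ 0 ∧ |(d:ℝ)*δ - 2*π*n| < η := by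
  set S := AddSubgroup.zmultiples δ ⊔ AddSubgroup.zmultiples (2*π) with hS
  rcases S.dense_or_cyclic with hd | ⟨a, ha⟩
  · have hne : (Set.Ioo (0:ℝ) (min η π)).Nonempty :=
      Set.nonempty_Ioo.mpr (lt_min hη Real.pi_pos)
    obtain ⟨g, hgS, hg⟩ := hd.exists_mem_open isOpen_Ioo hne
    obtain ⟨x, hx, y, hy, hxy⟩ := (AddSubgroup.mem_sup).mp hgS
    obtain ⟨m, hm⟩ := AddSubgroup.mem_zmultiples_iff.mp hx
    obtain ⟨l, hl⟩ := AddSubgroup.mem_zmultiples_iff.mp hy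
    rw [zsmul_eq_mul] at hm hl
    have hgval : (m:ℝ) * δ + l * (2*π) = g := by rw [hm, hl]; exact hxy
    have hg0 : 0 < g := hg.1
    have hgη : g < min η π := hg.2
    have hm0 : m ≠ 0 := by
      rintro rfl
      simp only [Int.cast_zero, zero_mul, zero_add] at hgval
      rcases le_or_gt l 0 with h | h
      · have : (l:ℝ) * (2*π) ≤ 0 := mul_nonpos_of_nonpos_of_nonneg (by exact_mod_cast h) (by positivity)
        linarith
      · have h1 : (1:ℝ) ≤ (l:ℝ) := by exact_mod_cast h
        have : 2*π ≤ (l:ℝ) * (2*π) := le_mul_of_one_le_left (by positivity) h1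
        have := Real.pi_pos
        have hgπ : g < π := lt_of_lt_of_le hgη (min_le_right _ _)
        linarith
    rcases hm0.lt_or_gt with hneg | hpos
    · refine ⟨(-m).toNat, ?_, l, ?_, ?_⟩
      · omega
      · have hcast : ((-m).toNat : ℝ) = -(m:ℝ) := by
          have : ((-m).toNat : ℤ) = -m := Int.toNat_of_nonneg (by omega)
          exact_mod_cast congrArg (Int.cast : ℤ → ℝ) this
        rw [hcast]
        intro h
        have : g = 0 := by linarith [hgval, h]
        · nlinarith [hgval]
      · have hcast : ((-m).toNat : ℝ) = -(m:ℝ) := by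
          have : ((-m).toNat : ℤ) = -m := Int.toNat_of_nonneg (by omega)
          exact_mod_cast congrArg (Int.cast : ℤ → ℝ) this
        rw [hcast]
        have : -(m:ℝ)*δ - 2*π*l = -g := by linarith [hgval]
        rw [this, abs_neg, abs_of_pos hg0]
        exact lt_of_lt_of_le hgη (min_le_left _ _)
    · refine ⟨m.toNat, ?_, -l, ?_, ?_⟩
      · omega
      · have hcast : (m.toNat : ℝ) = (m:ℝ) := by
          have : (m.toNat : ℤ) = m := Int.toNat_of_nonneg (by omega)
          exact_mod_cast congrArg (Int.cast : ℤ → ℝ) this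
        rw [hcast]
        push_cast
        intro h
        nlinarith [hgval]
      · have hcast : (m.toNat : ℝ) = (m:ℝ) := by
          have : (m.toNat : ℤ) = m := Int.toNat_of_nonneg (by omega)
          exact_mod_cast congrArg (Int.cast : ℤ → ℝ) this
        rw [hcast]
        push_cast
        have : (m:ℝ)*δ - 2*π*(-l) = g := by push_cast; linarith [hgval]
        rw [show (m:ℝ)*δ - 2*π*(-(l:ℝ)) = g by push_cast; linarith [hgval], abs_of_pos hg0]
        exact lt_of_lt_of_le hgη (min_le_left _ _)
  · exfalso
    have hδS : δ ∈ S := AddSubgroup.mem_sup_left (AddSubgroup.mem_zmultiples δ)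
    have hπS : (2*π) ∈ S := AddSubgroup.mem_sup_right (AddSubgroup.mem_zmultiples (2*π))
    rw [ha, AddSubgroup.mem_closure_singleton] at hδS hπS
    obtain ⟨m, hm⟩ := hδS
    obtain ⟨l, hl⟩ := hπS
    rw [zsmul_eq_mul] at hm hl
    have hπ := Real.pi_pos
    have hl0 : l ≠ 0 := by rintro rfl; simp at hl
    have ha0 : a ≠ 0 := by rintro rfl; simp at hl
    apply hirr
    have hlR : (l:ℝ) ≠ 0 := Int.cast_ne_zero.mpr hl0
    refine ⟨(2*m)/l, ?_⟩
    have hcast : ((2*(m:ℚ)/(l:ℚ) : ℚ) : ℝ) = (2*(m:ℝ))/(l:ℝ) := by push_cast; ring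
    rw [hcast, div_eq_div_iff hlR (ne_of_gt hπ)]
    linear_combination (l:ℝ)*hm - (m:ℝ)*hl

private lemma step_lemma (g η a B : ℝ) (hg : 0 < g) (hgη : g < η)
    (h1 : a ≤ B) (h2 : B ≤ a + 2*π) :
    ∃ j : ℕ, j ≤ ⌈2*π/g⌉₊ ∧ |a + j*g - B| < η := by
  refine ⟨⌈(B - a)/g⌉₊, ?_, ?_⟩
  · exact Nat.ceil_le_ceil (by gcongr; linarith)
  · have hnn : 0 ≤ (B - a)/g := div_nonneg (by linarith) hg.le
    have jge : (B - a)/g ≤ (⌈(B - a)/g⌉₊ : ℝ) := Nat.le_ceil _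
    have jlt : (⌈(B - a)/g⌉₊ : ℝ) < (B - a)/g + 1 := Nat.ceil_lt_add_one hnn
    have hjg : B - a ≤ (⌈(B - a)/g⌉₊ : ℝ) * g := by
      rw [← div_le_iff₀ hg]; exact jge
    have hjg2 : (⌈(B - a)/g⌉₊ : ℝ) * g < B - a + g := by
      have := mul_lt_mul_of_pos_right jlt hg
      rw [add_mul, one_mul, div_mul_cancel₀ _ hg.ne'] at this
      linarith
    rw [abs_lt]
    constructor <;> linarith

private lemma near_multiple (g η : ℝ) (hg : g ≠ 0) (hgη : |g| < η) (a : ℝ) :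
    ∃ j : ℕ, j ≤ ⌈2*π/|g|⌉₊ ∧ ∃ N : ℤ, |a + j*g - 2*π*N| < η := by
  have h2π : 0 < 2*π := by positivity
  rcases hg.lt_or_gt with hneg | hpos
  · set N : ℤ := ⌊a/(2*π)⌋ with hN
    have hB1 : 2*π*N ≤ a := by
      rw [mul_comm, ← le_div_iff₀ h2π]; exact Int.floor_le _
    have hB2 : a ≤ 2*π*N + 2*π := by
      have := (Int.lt_floor_add_one (a/(2*π)))
      have := (div_lt_iff₀ h2π).mp this
      push_cast at this ⊢
      nlinarith
    obtain ⟨j, hj1, hj2⟩ := step_lemma (-g) η (-a) (-(2*π*N)) (by linarith) (by rwa [abs_of_neg hneg] at hgη) (by linarith) (by linarith)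
    refine ⟨j, by rwa [abs_of_neg hneg], N, ?_⟩
    have he : -a + (j:ℝ)*(-g) - -(2*π*N) = -(a + j*g - 2*π*N) := by ring
    rw [he, abs_neg] at hj2
    exact hj2
  · set N : ℤ := ⌈a/(2*π)⌉ with hN
    have hB1 : a ≤ 2*π*N := by
      rw [mul_comm, ← div_le_iff₀ h2π]; exact Int.le_ceil _
    have hB2 : 2*π*N ≤ a + 2*π := by
      have h := Int.ceil_lt_add_one (a/(2*π))
      have h3 : ((N:ℝ)) * (2*π) < (a/(2*π)+1)*(2*π) := mul_lt_mul_of_pos_right h h2π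
      have h4 : (a/(2*π)+1)*(2*π) = a + 2*π := by field_simp
      linarith
    obtain ⟨j, hj1, hj2⟩ := step_lemma g η a (2*π*N) hpos (by rwa [abs_of_pos hpos] at hgη) hB1 hB2
    exact ⟨j, by rwa [abs_of_pos hpos], N, hj2⟩

private lemma syndetic (δ : ℝ) (hδpos : 0 < δ) (hirr : Irrational (δ / Real.pi))
    (η : ℝ) (hη : 0 < η) :
    ∃ K : ℕ, ∀ m : ℕ, ∃ k : ℕ, m ≤ k ∧ k ≤ m + K ∧ ∃ N : ℤ, |(k:ℝ)*δ - 2*π*N| < η := by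
  obtain ⟨d, hd1, n, hne, hlt⟩ := exists_small δ hδpos hirr η hη
  set g := (d:ℝ)*δ - 2*π*n with hg
  refine ⟨d * ⌈2*π/|g|⌉₊, fun m => ?_⟩
  obtain ⟨j, hj, N, hNlt⟩ := near_multiple g η hne hlt ((m:ℝ)*δ)
  refine ⟨m + j*d, Nat.le_add_right _ _, ?_, N + j*n, ?_⟩
  · have : j*d ≤ d * ⌈2*π/|g|⌉₊ := by
      rw [mul_comm]; exact Nat.mul_le_mul_left d hj
    omega
  · have he : ((m + j*d : ℕ) : ℝ)*δ - 2*π*((N + j*n : ℤ):ℝ) = (m:ℝ)*δ + j*g - 2*π*N := by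
      push_cast; rw [hg]; ring
    rw [he]
    exact hNlt

theorem statement_7 (θ₀ δ : ℝ) (hδ : δ ∈ Set.Ioo (0 : ℝ) Real.pi)
    (hirr : Irrational (δ / Real.pi)) (ε : ℝ) (hε : 0 < ε) :
    SatisfiesGRC (diskBilliard θ₀ δ) ε := by
  obtain ⟨hδ0, hδπ⟩ := hδ
  have hπ := Real.pi_pos
  set L := 2 * Real.sin (δ / 2) with hLdef
  have hsin : 0 < Real.sin (δ/2) :=
    Real.sin_pos_of_pos_of_lt_pi (by linarith) (by linarith)
  have hL : 0 < L := by rw [hLdef]; linarith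
  set r := min ε 1 / 2 with hrdef
  have hr0 : 0 < r := by rw [hrdef]; have := lt_min hε one_pos; linarith
  have hrε : r < ε := by
    have h1 : min ε 1 ≤ ε := min_le_left _ _
    rw [hrdef]; linarith
  set c := min (r/4) (L/2) with hcdef
  have hc0 : 0 < c := lt_min (by linarith) (by linarith)
  have hcr : c ≤ r/4 := min_le_left _ _
  have hcL : c ≤ L/2 := min_le_right _ _
  obtain ⟨K, hK⟩ := syndetic δ hδ0 hirr (r/2) (by linarith)
  have Hsel : ∀ i : ℕ, ∃ k : ℕ, i*(K+1) ≤ k ∧ k ≤ i*(K+1) + K ∧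
      ∃ N : ℤ, |(k:ℝ)*δ - 2*Real.pi*N| < r/2 := fun i => hK (i*(K+1))
  choose k hk1 hk2 hk3 using Hsel
  set p := diskBounce θ₀ δ 0 with hpdef
  refine ⟨p, r, hr0, hrε, ?_⟩
  have hincl : ∀ i : ℕ, ∀ t ∈ Set.Icc ((k i : ℝ)*L) ((k i : ℝ)*L + c),
      dist (diskBilliard θ₀ δ t) p < r := by
    intro i t ht
    obtain ⟨ht1, ht2⟩ := ht
    have h2 : t < ((k i : ℝ)+1)*L := by nlinarith
    have htk := traj_close θ₀ δ ⟨hδ0, hδπ⟩ (k i) t (by rw [← hLdef]; exact ht1)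
      (by rw [← hLdef]; exact h2)
    rw [← hLdef] at htk
    obtain ⟨N, hN⟩ := hk3 i
    have hbp := bounce_close θ₀ δ (k i) N
    rw [← hpdef] at hbp
    have hbp2 : dist (diskBounce θ₀ δ (k i)) p < r/2 := lt_of_le_of_lt hbp hN
    calc dist (diskBilliard θ₀ δ t) p
        ≤ dist (diskBilliard θ₀ δ t) (diskBounce θ₀ δ (k i))
          + dist (diskBounce θ₀ δ (k i)) p := dist_triangle _ _ _
      _ < r := by rw [htk]; linarith
  have key : ∀ T : ℝ, 0 ≤ T →
      ((⌊T / (((K:ℝ)+1)*L)⌋₊ : ℝ) * c) ≤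
      (volume {t ∈ Set.Icc (0:ℝ) T | dist (diskBilliard θ₀ δ t) p < r}).toReal := by
    intro T hT
    set N := ⌊T / (((K:ℝ)+1)*L)⌋₊ with hNdef
    set S := {t ∈ Set.Icc (0:ℝ) T | dist (diskBilliard θ₀ δ t) p < r} with hSdef
    have hKr : 0 < ((K:ℝ)+1)*L := by positivity
    have hNT : (N:ℝ) * (((K:ℝ)+1)*L) ≤ T := by
      rw [hNdef]
      exact (le_div_iff₀ hKr).mp (Nat.floor_le (div_nonneg hT hKr.le))
    have hsub : ∀ i ∈ Finset.range N,
        Set.Icc ((k i : ℝ)*L) ((k i : ℝ)*L + c) ⊆ S := by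
      intro i hi t ht
      obtain ⟨ht1, ht2⟩ := ht
      have hkiN : ((k i : ℝ) + 1) ≤ (N:ℝ)*((K:ℝ)+1) := by
        have hi' : i + 1 ≤ N := Finset.mem_range.mp hi
        have hki : k i + 1 ≤ (i+1)*(K+1) := by
          have := hk2 i
          calc k i + 1 ≤ i*(K+1) + K + 1 := by omega
            _ = (i+1)*(K+1) := by ring
        have h3 : (i+1)*(K+1) ≤ N*(K+1) := Nat.mul_le_mul_right _ hi'
        have : k i + 1 ≤ N*(K+1) := le_trans hki h3
        exact_mod_cast this
      refine ⟨⟨?_, ?_⟩, hincl i t ⟨ht1, ht2⟩⟩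
      · have : (0:ℝ) ≤ (k i : ℝ)*L := by positivity
        linarith
      · have h1 : (k i : ℝ)*L + c ≤ ((k i : ℝ)+1)*L := by nlinarith
        have h2 : ((k i : ℝ)+1)*L ≤ (N:ℝ)*((K:ℝ)+1)*L :=
          mul_le_mul_of_nonneg_right hkiN hL.le
        have h3 : (N:ℝ)*((K:ℝ)+1)*L = (N:ℝ)*(((K:ℝ)+1)*L) := by ring
        linarith
    have key2 : ∀ a b : ℕ, a < b →
        Disjoint (Set.Icc ((k a : ℝ)*L) ((k a:ℝ)*L + c))
          (Set.Icc ((k b : ℝ)*L) ((k b:ℝ)*L + c)) := by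
      intro a b hab
      have hka : k a + 1 ≤ k b := by
        calc k a + 1 ≤ a*(K+1) + K + 1 := by have := hk2 a; omega
          _ = (a+1)*(K+1) := by ring
          _ ≤ b*(K+1) := Nat.mul_le_mul_right _ hab
          _ ≤ k b := hk1 b
      rw [Set.disjoint_left]
      rintro x ⟨hx1, hx2⟩ ⟨hx3, hx4⟩
      have hc1 : ((k a : ℝ) + 1) ≤ (k b : ℝ) := by exact_mod_cast hka
      nlinarith
    have hdisj : (↑(Finset.range N) : Set ℕ).PairwiseDisjoint
        (fun i => Set.Icc ((k i : ℝ)*L) ((k i : ℝ)*L + c)) := by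
      intro i _ j _ hij
      rcases lt_or_gt_of_ne hij with h | h
      · exact key2 i j h
      · exact (key2 j i h).symm
    have hUnion : volume (⋃ i ∈ Finset.range N, Set.Icc ((k i : ℝ)*L) ((k i : ℝ)*L + c))
        = (N : ℝ≥0∞) * ENNReal.ofReal c := by
      rw [measure_biUnion_finset hdisj (fun i _ => measurableSet_Icc)]
      have : ∀ i : ℕ, volume (Set.Icc ((k i : ℝ)*L) ((k i : ℝ)*L + c)) = ENNReal.ofReal c := by
        intro i; rw [Real.volume_Icc]; congr 1; ring
      simp only [this, Finset.sum_const, Finset.card_range, nsmul_eq_mul]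
    have hUS : (⋃ i ∈ Finset.range N, Set.Icc ((k i : ℝ)*L) ((k i : ℝ)*L + c)) ⊆ S :=
      Set.iUnion₂_subset hsub
    have hle : (N : ℝ≥0∞) * ENNReal.ofReal c ≤ volume S := hUnion ▸ measure_mono hUS
    have hSfin : volume S ≤ ENNReal.ofReal T := by
      calc volume S ≤ volume (Set.Icc (0:ℝ) T) := measure_mono (Set.sep_subset _ _)
        _ = ENNReal.ofReal T := by rw [Real.volume_Icc, sub_zero]
    have hfin : volume S ≠ ⊤ := ne_top_of_le_ne_top ENNReal.ofReal_ne_top hSfin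
    have hmono := ENNReal.toReal_mono hfin hle
    simpa [ENNReal.toReal_ofReal hc0.le] using hmono
  set b := c / (2*(((K:ℝ)+1)*L)) with hbdef
  have hA : 0 < ((K:ℝ)+1)*L := by positivity
  have hb : 0 < b := by rw [hbdef]; positivity
  apply lt_of_lt_of_le hb
  apply Filter.le_liminf_of_le
  · apply Filter.IsBoundedUnder.isCoboundedUnder_ge
    refine ⟨1, ?_⟩
    rw [Filter.eventually_map]
    filter_upwards [Filter.eventually_ge_atTop (1:ℝ)] with T hT
    have hT0 : (0:ℝ) < T := by linarith
    have h1 : (volume {t ∈ Set.Icc (0:ℝ) T | dist (diskBilliard θ₀ δ t) p < r}).toReal ≤ T := by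
      apply ENNReal.toReal_le_of_le_ofReal hT0.le
      calc volume {t ∈ Set.Icc (0:ℝ) T | dist (diskBilliard θ₀ δ t) p < r}
          ≤ volume (Set.Icc (0:ℝ) T) := measure_mono (Set.sep_subset _ _)
        _ = ENNReal.ofReal T := by rw [Real.volume_Icc, sub_zero]
    exact div_le_one_of_le₀ h1 hT0.le
  · filter_upwards [Filter.eventually_ge_atTop (max 1 (2*(((K:ℝ)+1)*L)))] with T hT
    have hT1 : (1:ℝ) ≤ T := le_trans (le_max_left _ _) hT
    have hT2 : 2*(((K:ℝ)+1)*L) ≤ T := le_trans (le_max_right _ _) hT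
    have hT0 : (0:ℝ) < T := by linarith
    have hkey := key T (by linarith)
    rw [le_div_iff₀ hT0]
    have hNfl : T/(((K:ℝ)+1)*L) - 1 ≤ (⌊T/(((K:ℝ)+1)*L)⌋₊ : ℝ) := by
      have := Nat.sub_one_lt_floor (T/(((K:ℝ)+1)*L))
      linarith
    have hX : (1:ℝ) ≤ T/(2*(((K:ℝ)+1)*L)) := (one_le_div (by positivity)).mpr hT2
    have hXX : T/(((K:ℝ)+1)*L) = 2*(T/(2*(((K:ℝ)+1)*L))) := by
      field_simp
    calc b * T = c * (T/(2*(((K:ℝ)+1)*L))) := by rw [hbdef]; ring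
      _ ≤ c * (T/(((K:ℝ)+1)*L) - 1) := by
          apply mul_le_mul_of_nonneg_left ?_ hc0.le
          rw [hXX]; linarith
      _ ≤ c * (⌊T/(((K:ℝ)+1)*L)⌋₊ : ℝ) := by
          apply mul_le_mul_of_nonneg_left hNfl hc0.le
      _ = (⌊T/(((K:ℝ)+1)*L)⌋₊ : ℝ) * c := by ring
      _ ≤ _ := hkey
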